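/- There exist ε₀ > 0 and C > 0 such that for every ε ∈ (0, ε₀) and every minimizing extremal (ω, θ, λ) for ε (with ω defined on [0,L]): max_{t ∈ [0,L]} |P(ω(t))| ≤ C·ε^{(3m−2)/2}. -/

import Mathlib

open MeasureTheory

/-- `P(x₁,x₂) = x₁² − x₂^m`. -/
noncomputable def Pf (m : ℕ) (x : ℝ × ℝ) : ℝ := x.1 ^ 2 - x.2 ^ m

/-- `Q(x₁,x₂) = 4x₁(x₁² − x₂^m)`. -/
noncomputable def Qf (m : ℕ) (x : ℝ × ℝ) : ℝ := 4 * x.1 * (x.1 ^ 2 - x.2 ^ m)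

/-- The reference curve `ω̄(t) = (t^{m/2}, t)`; in particular `A_ε = barCurve m ε`. -/
noncomputable def barCurve (m : ℕ) (t : ℝ) : ℝ × ℝ := (t ^ ((m : ℝ) / 2), t)

/-- Euclidean length `∫₀^τ ‖ζ'(t)‖ dt` of a curve with (a.e.) derivative `ζ'`. -/
noncomputable def eLength (ζ' : ℝ → ℝ × ℝ) (τ : ℝ) : ℝ :=
  ∫ t in (0:ℝ)..τ, Real.sqrt ((ζ' t).1 ^ 2 + (ζ' t).2 ^ 2)

/-- `L(ω̄_ε) = ∫₀^ε √(1 + (m/2)² t^{m−2}) dt`. -/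
noncomputable def barLength (m : ℕ) (ε : ℝ) : ℝ :=
  ∫ t in (0:ℝ)..ε, Real.sqrt (1 + ((m : ℝ) / 2) ^ 2 * t ^ (m - 2))

/-- A constrained competitor for `ε`: a Lipschitz curve `ζ : [0,τ] → ℝ²` with a.e. derivative
`ζ'`, joining `A₀ = (0,0)` to `A_ε = (ε^{m/2}, ε)`, with `∫₀^τ P(ζ(t))² ζ₂'(t) dt = 0`. -/
def IsCompetitor (m : ℕ) (ε τ : ℝ) (ζ ζ' : ℝ → ℝ × ℝ) : Prop :=
  0 ≤ τ ∧
  (∃ K : NNReal, LipschitzOnWith K ζ (Set.Icc 0 τ)) ∧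
  ζ 0 = ((0 : ℝ), (0 : ℝ)) ∧
  ζ τ = barCurve m ε ∧
  (∀ᵐ t ∂volume, t ∈ Set.Icc (0:ℝ) τ → HasDerivAt ζ (ζ' t) t) ∧
  (∫ t in (0:ℝ)..τ, (Pf m (ζ t)) ^ 2 * (ζ' t).2) = 0

/-- A minimizing extremal for `ε`: `(ω, θ, λ)` solving the extremal ODE system on `[0,L]`,
with `ω` a constrained competitor (parametrized by arc length, hence of length `L`),
minimizing the length among all constrained competitors, and whose image differs from
that of `ω̄_ε`. -/
def IsMinExtremal (m : ℕ) (ε L lam : ℝ) (ω : ℝ → ℝ × ℝ) (θ : ℝ → ℝ) : Prop :=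
  0 < L ∧
  (∀ t ∈ Set.Icc (0:ℝ) L, HasDerivAt ω (Real.cos (θ t), Real.sin (θ t)) t) ∧
  (∀ t ∈ Set.Icc (0:ℝ) L, HasDerivAt θ (lam * Qf m (ω t)) t) ∧
  IsCompetitor m ε L ω (fun t => (Real.cos (θ t), Real.sin (θ t))) ∧
  (∀ τ (ζ ζ' : ℝ → ℝ × ℝ), IsCompetitor m ε τ ζ ζ' → L ≤ eLength ζ' τ) ∧
  ω '' Set.Icc (0:ℝ) L ≠ barCurve m '' Set.Icc (0:ℝ) ε

/-!
Comparing with the reference curve `ω̄_ε` shows that a minimizer has excess length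
`L - ε = O(ε^{m-1})`. Since `ω₂' = sin θ`, the excess is `∫ (1 - sin θ)`, and
`cos² θ ≤ 2 (1 - sin θ)` then gives `|ω₁| = O(ε^{m/2})` and `|ω₂| = O(ε)`, so `P ∘ ω` is
`B`-Lipschitz with `B = O(ε^{m/2})`. Let `M = max |P ∘ ω|`. The constraint turns `∫ P(ω)²` into
`∫ P(ω)² (1 - sin θ) ≤ M² (L - ε)`; on the other hand `P(ω(0)) = 0`, so `|P ∘ ω| ≥ M / 2` on an
interval of length `M / (2B)` and `∫ P(ω)² ≥ M³ / (8B)`. Hence `M ≤ 8B (L - ε) = O(ε^{(3m-2)/2})`.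
-/

open Real Set intervalIntegral

theorem HasDerivAt.fst {f : ℝ → ℝ × ℝ} {v : ℝ × ℝ} {t : ℝ} (h : HasDerivAt f v t) :
    HasDerivAt (fun s => (f s).1) v.1 t := by
  simpa using h.hasFDerivAt.fst.hasDerivAt

theorem HasDerivAt.snd {f : ℝ → ℝ × ℝ} {v : ℝ × ℝ} {t : ℝ} (h : HasDerivAt f v t) :
    HasDerivAt (fun s => (f s).2) v.2 t := by
  simpa using h.hasFDerivAt.snd.hasDerivAt

theorem abs_pow_three_le_integral_sq {f f' : ℝ → ℝ} {B L t : ℝ} (hB : 0 < B)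
    (hf : ∀ x ∈ Icc 0 L, HasDerivWithinAt f (f' x) (Icc 0 L) x)
    (hf' : ∀ x ∈ Icc 0 L, |f' x| ≤ B) (h0 : f 0 = 0) (ht : t ∈ Icc 0 L) :
    |f t| ^ 3 ≤ 8 * B * ∫ s in (0:ℝ)..L, f s ^ 2 := by
  have hlip : ∀ x ∈ Icc 0 L, ∀ y ∈ Icc 0 L, |f y - f x| ≤ B * |y - x| := fun x hx y hy =>
    (convex_Icc 0 L).norm_image_sub_le_of_norm_hasDerivWithin_le hf hf' hx hy
  have hcont : ContinuousOn f (Icc 0 L) := fun x hx => (hf x hx).continuousWithinAt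
  have hsq : ContinuousOn (fun s => f s ^ 2) (Icc 0 L) := hcont.pow 2
  -- on `[t - r, t]` the Lipschitz bound keeps `|f|` above `|f t| / 2`
  set a := |f t|
  set r := a / (2 * B) with hr_def
  have hr : 0 ≤ r := by positivity
  have hBr : B * r = a / 2 := by rw [hr_def]; field_simp
  have htr : 2 * r ≤ t := by
    have := hlip 0 ⟨le_rfl, ht.1.trans ht.2⟩ t ht
    rw [h0, sub_zero, sub_zero, abs_of_nonneg ht.1] at this
    nlinarith
  have hsub : Icc (t - r) t ⊆ Icc 0 L := Icc_subset_Icc (by linarith) ht.2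
  have hlow : ∀ s ∈ Icc (t - r) t, (a / 2) ^ 2 ≤ f s ^ 2 := by
    intro s hs
    have h1 := hlip s (hsub hs) t ht
    rw [abs_of_nonneg (sub_nonneg.2 hs.2)] at h1
    have h2 := abs_sub_abs_le_abs_sub (f t) (f s)
    have h3 : a / 2 ≤ |f s| := by
      nlinarith [mul_le_mul_of_nonneg_left (by linarith [hs.1] : t - s ≤ r) hB.le]
    simpa only [sq_abs] using pow_le_pow_left₀ (by positivity) h3 2
  calc a ^ 3 = 8 * B * ((a / 2) ^ 2 * r) := by rw [hr_def]; field_simp; ring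
  _ ≤ 8 * B * ∫ s in (t - r)..t, f s ^ 2 := by
      gcongr
      calc (a / 2) ^ 2 * r = ∫ s in (t - r)..t, (a / 2) ^ 2 := by
            rw [intervalIntegral.integral_const, sub_sub_cancel, smul_eq_mul, mul_comm]
      _ ≤ _ := integral_mono_on (by linarith) intervalIntegrable_const
          ((hsq.mono hsub).intervalIntegrable_of_Icc (by linarith)) hlow
  _ ≤ 8 * B * ∫ s in (0:ℝ)..L, f s ^ 2 := by
      gcongr
      exact integral_mono_interval (by linarith) (by linarith) ht.2
        (Filter.Eventually.of_forall fun s => sq_nonneg _)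
        (hsq.intervalIntegrable_of_Icc (ht.1.trans ht.2))

theorem abs_cos_le_one_sub_sin_div_add (x : ℝ) {σ : ℝ} (hσ : 0 < σ) :
    |cos x| ≤ (1 - sin x) / σ + σ / 2 := by
  -- `cos² x = (1 - sin x)(1 + sin x) ≤ 2 (1 - sin x)`, then AM-GM
  rw [div_add_div _ _ hσ.ne' two_ne_zero, le_div_iff₀ (by positivity)]
  nlinarith [sin_sq_add_cos_sq x, sq_nonneg (|cos x| - σ), sq_abs (cos x), sin_le_one x,
    neg_one_le_sin x]

theorem integral_abs_cos_le {θ : ℝ → ℝ} {L σ : ℝ} (hθ : ContinuousOn θ (Icc 0 L)) (hL : 0 ≤ L)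
    (hσ : 0 < σ) :
    ∫ t in (0:ℝ)..L, |cos (θ t)| ≤ (L - ∫ t in (0:ℝ)..L, sin (θ t)) / σ + σ * L / 2 := by
  have hsin : IntervalIntegrable (fun t => sin (θ t)) volume 0 L :=
    (continuous_sin.comp_continuousOn hθ).intervalIntegrable_of_Icc hL
  have hcos : IntervalIntegrable (fun t => |cos (θ t)|) volume 0 L :=
    (continuous_cos.comp_continuousOn hθ).abs.intervalIntegrable_of_Icc hL
  calc ∫ t in (0:ℝ)..L, |cos (θ t)| ≤ ∫ t in (0:ℝ)..L, ((1 - sin (θ t)) / σ + σ / 2) :=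
        integral_mono_on hL hcos ((intervalIntegrable_const.sub hsin).div_const _ |>.add
          intervalIntegrable_const) fun x _ => abs_cos_le_one_sub_sin_div_add _ hσ
  _ = _ := by
      rw [integral_add ((intervalIntegrable_const.sub hsin).div_const _) intervalIntegrable_const,
        intervalIntegral.integral_div, integral_sub intervalIntegrable_const hsin, integral_one,
        intervalIntegral.integral_const, smul_eq_mul, sub_zero]
      ring

theorem integral_sq_le_of_integral_sq_mul_sin_eq_zero {f θ : ℝ → ℝ} {L M : ℝ}
    (hf : ContinuousOn f (Icc 0 L)) (hθ : ContinuousOn θ (Icc 0 L)) (hL : 0 ≤ L)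
    (hM : ∀ x ∈ Icc 0 L, |f x| ≤ M) (h : ∫ t in (0:ℝ)..L, f t ^ 2 * sin (θ t) = 0) :
    ∫ t in (0:ℝ)..L, f t ^ 2 ≤ M ^ 2 * (L - ∫ t in (0:ℝ)..L, sin (θ t)) := by
  have hsin := continuous_sin.comp_continuousOn hθ
  have hsin' : IntervalIntegrable (fun t => sin (θ t)) volume 0 L :=
    hsin.intervalIntegrable_of_Icc hL
  have h1 : IntervalIntegrable (fun t => f t ^ 2 * (1 - sin (θ t))) volume 0 L :=
    ((hf.pow 2).mul (continuousOn_const.sub hsin)).intervalIntegrable_of_Icc hL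
  have h2 : IntervalIntegrable (fun t => f t ^ 2 * sin (θ t)) volume 0 L :=
    ((hf.pow 2).mul hsin).intervalIntegrable_of_Icc hL
  calc ∫ t in (0:ℝ)..L, f t ^ 2
      = (∫ t in (0:ℝ)..L, f t ^ 2 * (1 - sin (θ t))) + ∫ t in (0:ℝ)..L, f t ^ 2 * sin (θ t) := by
        rw [← integral_add h1 h2]; congr 1; ext t; ring
  _ ≤ ∫ t in (0:ℝ)..L, M ^ 2 * (1 - sin (θ t)) := by
      rw [h, add_zero]
      refine integral_mono_on hL h1 ((intervalIntegrable_const.sub hsin').const_mul _)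
        fun x hx => ?_
      have : f x ^ 2 ≤ M ^ 2 := by
        simpa only [sq_abs] using pow_le_pow_left₀ (abs_nonneg _) (hM x hx) 2
      nlinarith [sin_le_one (θ x)]
  _ = M ^ 2 * (L - ∫ t in (0:ℝ)..L, sin (θ t)) := by
      rw [intervalIntegral.integral_const_mul, integral_sub intervalIntegrable_const hsin']; simp

theorem abs_le_of_integral_sq_mul_sin_eq_zero {f f' θ : ℝ → ℝ} {B L t : ℝ} (hB : 0 < B)
    (hf : ∀ x ∈ Icc 0 L, HasDerivWithinAt f (f' x) (Icc 0 L) x)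
    (hf' : ∀ x ∈ Icc 0 L, |f' x| ≤ B) (h0 : f 0 = 0) (hθ : ContinuousOn θ (Icc 0 L))
    (h : ∫ t in (0:ℝ)..L, f t ^ 2 * sin (θ t) = 0) (ht : t ∈ Icc 0 L) :
    |f t| ≤ 8 * B * (L - ∫ t in (0:ℝ)..L, sin (θ t)) := by
  have hL : 0 ≤ L := ht.1.trans ht.2
  have hcont : ContinuousOn f (Icc 0 L) := fun x hx => (hf x hx).continuousWithinAt
  obtain ⟨t₀, ht₀, hmax⟩ := isCompact_Icc.exists_isMaxOn ⟨t, ht⟩ hcont.abs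
  have hM : ∀ x ∈ Icc 0 L, |f x| ≤ |f t₀| := fun x hx => hmax hx
  have hD : 0 ≤ L - ∫ t in (0:ℝ)..L, sin (θ t) := by
    have : ∫ t in (0:ℝ)..L, sin (θ t) ≤ ∫ t in (0:ℝ)..L, (1:ℝ) :=
      integral_mono_on hL ((continuous_sin.comp_continuousOn hθ).intervalIntegrable_of_Icc hL)
        intervalIntegrable_const fun x _ => sin_le_one (θ x)
    rw [integral_one, sub_zero] at this
    linarith
  have hcube := (abs_pow_three_le_integral_sq hB hf hf' h0 ht₀).trans
    (mul_le_mul_of_nonneg_left (integral_sq_le_of_integral_sq_mul_sin_eq_zero hcont hθ hL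
      hM h) (by positivity))
  refine (hM t ht).trans ?_
  rcases (abs_nonneg (f t₀)).eq_or_lt with h0' | hpos
  · rw [← h0']; positivity
  · nlinarith [pow_pos hpos 2]

theorem hasDerivAt_Pf_comp (m : ℕ) {ω : ℝ → ℝ × ℝ} {v : ℝ × ℝ} {t : ℝ} (h : HasDerivAt ω v t) :
    HasDerivAt (fun s => Pf m (ω s)) (2 * (ω t).1 * v.1 - m * (ω t).2 ^ (m - 1) * v.2) t :=
  ((h.fst.fun_pow 2).fun_sub (h.snd.fun_pow m)).congr_deriv (by norm_num)

theorem Pf_barCurve (m : ℕ) {t : ℝ} (ht : 0 ≤ t) : Pf m (barCurve m t) = 0 := by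
  rw [Pf, barCurve, ← rpow_natCast, ← rpow_mul ht, ← rpow_natCast]
  norm_num

noncomputable def barDeriv (m : ℕ) (t : ℝ) : ℝ × ℝ := ((m / 2 : ℝ) * t ^ ((m : ℝ) / 2 - 1), 1)

theorem hasDerivAt_barCurve {m : ℕ} (hm : 2 ≤ m) (t : ℝ) :
    HasDerivAt (barCurve m) (barDeriv m t) t :=
  (hasDerivAt_rpow_const (Or.inr (by rw [le_div_iff₀ two_pos]; exact_mod_cast hm))).prodMk
    (hasDerivAt_id t)

theorem isCompetitor_barCurve {m : ℕ} (hm : 2 ≤ m) {ε : ℝ} (hε : 0 ≤ ε) :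
    IsCompetitor m ε ε (barCurve m) (barDeriv m) := by
  have hC1 : ContDiff ℝ 1 (barCurve m) :=
    (contDiff_rpow_const_of_le (by rw [Nat.cast_one, le_div_iff₀ two_pos]; exact_mod_cast hm)
      ).prodMk contDiff_id
  refine ⟨hε, hC1.contDiffOn.exists_lipschitzOnWith one_ne_zero (convex_Icc _ _) isCompact_Icc,
    ?_, rfl, Filter.Eventually.of_forall fun t _ => hasDerivAt_barCurve hm t, ?_⟩
  · simp [barCurve, zero_rpow (by positivity : (m : ℝ) / 2 ≠ 0)]
  · refine (integral_congr fun t ht => ?_).trans integral_zero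
    rw [uIcc_of_le hε] at ht
    simp [Pf_barCurve m ht.1]

theorem eLength_barDeriv_le {m : ℕ} (hm : 2 ≤ m) {ε : ℝ} (hε : 0 ≤ ε) :
    eLength (barDeriv m) ε ≤ ε + m ^ 2 / 8 * ε ^ (m - 1) := by
  have hp : (0 : ℝ) ≤ (m : ℝ) / 2 - 1 := by
    rw [sub_nonneg, le_div_iff₀ two_pos]; exact_mod_cast hm
  have hsq : ∀ t : ℝ, 0 ≤ t → (t ^ ((m : ℝ) / 2 - 1)) ^ 2 = t ^ (m - 2) := fun t ht => by
    rw [← rpow_natCast, ← rpow_mul ht, ← rpow_natCast]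
    push_cast [Nat.cast_sub hm]
    ring_nf
  -- `√(1 + a²) ≤ 1 + a²/2`, and `a² ≤ (m/2)² ε^{m-2}` on `[0, ε]`
  have hbound : ∀ t ∈ Icc 0 ε, √((barDeriv m t).1 ^ 2 + (barDeriv m t).2 ^ 2)
      ≤ 1 + m ^ 2 / 8 * ε ^ (m - 2) := fun t ht => by
    have ha : ((m / 2 : ℝ) * t ^ ((m : ℝ) / 2 - 1)) ^ 2 ≤ m ^ 2 / 4 * ε ^ (m - 2) := by
      rw [mul_pow, hsq t ht.1]
      have := pow_le_pow_left₀ ht.1 ht.2 (m - 2)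
      nlinarith [sq_nonneg (m : ℝ)]
    rw [sqrt_le_left (by positivity)]
    simp only [barDeriv]
    nlinarith [sq_nonneg ((m / 2 : ℝ) * t ^ ((m : ℝ) / 2 - 1))]
  have hcont : Continuous fun t => √((barDeriv m t).1 ^ 2 + (barDeriv m t).2 ^ 2) := by
    simp only [barDeriv]
    fun_prop (disch := exact hp)
  calc eLength (barDeriv m) ε ≤ ∫ _ in (0:ℝ)..ε, (1 + m ^ 2 / 8 * ε ^ (m - 2)) :=
        integral_mono_on hε (hcont.intervalIntegrable _ _) intervalIntegrable_const hbound
  _ = ε + m ^ 2 / 8 * ε ^ (m - 1) := by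
      rw [intervalIntegral.integral_const, smul_eq_mul, show m - 1 = m - 2 + 1 by omega, pow_succ]
      ring

namespace IsMinExtremal

variable {m : ℕ} {ε L lam : ℝ} {ω : ℝ → ℝ × ℝ} {θ : ℝ → ℝ}

theorem continuousOn_angle (h : IsMinExtremal m ε L lam ω θ) : ContinuousOn θ (Icc 0 L) :=
  let ⟨_, _, hθ, _⟩ := h
  fun t ht => (hθ t ht).continuousAt.continuousWithinAt

theorem length_le (h : IsMinExtremal m ε L lam ω θ) (hm : 2 ≤ m) (hε : 0 ≤ ε) :
    L ≤ ε + m ^ 2 / 8 * ε ^ (m - 1) :=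
  let ⟨_, _, _, _, hmin, _⟩ := h
  (hmin ε _ _ (isCompetitor_barCurve hm hε)).trans (eLength_barDeriv_le hm hε)

theorem fst_eq_integral (h : IsMinExtremal m ε L lam ω θ) {t : ℝ} (ht : t ∈ Icc 0 L) :
    (ω t).1 = ∫ s in (0:ℝ)..t, cos (θ s) := by
  obtain ⟨-, hω, -, ⟨-, -, hω0, -⟩, -⟩ := id h
  have hsub : uIcc 0 t ⊆ Icc 0 L := by rw [uIcc_of_le ht.1]; exact Icc_subset_Icc le_rfl ht.2
  rw [integral_eq_sub_of_hasDerivAt (fun s hs => (hω s (hsub hs)).fst)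
    (continuous_cos.comp_continuousOn (h.continuousOn_angle.mono hsub)).intervalIntegrable,
    hω0, sub_zero]

theorem snd_eq_integral (h : IsMinExtremal m ε L lam ω θ) {t : ℝ} (ht : t ∈ Icc 0 L) :
    (ω t).2 = ∫ s in (0:ℝ)..t, sin (θ s) := by
  obtain ⟨-, hω, -, ⟨-, -, hω0, -⟩, -⟩ := id h
  have hsub : uIcc 0 t ⊆ Icc 0 L := by rw [uIcc_of_le ht.1]; exact Icc_subset_Icc le_rfl ht.2
  rw [integral_eq_sub_of_hasDerivAt (fun s hs => (hω s (hsub hs)).snd)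
    (continuous_sin.comp_continuousOn (h.continuousOn_angle.mono hsub)).intervalIntegrable,
    hω0, sub_zero]

theorem integral_sin (h : IsMinExtremal m ε L lam ω θ) : ∫ s in (0:ℝ)..L, sin (θ s) = ε := by
  obtain ⟨hL, -, -, ⟨-, -, -, hωL, -⟩, -⟩ := id h
  rw [← h.snd_eq_integral ⟨hL.le, le_rfl⟩, hωL]
  rfl

theorem abs_fst_le (h : IsMinExtremal m ε L lam ω θ) {σ : ℝ} (hσ : 0 < σ) {t : ℝ}
    (ht : t ∈ Icc 0 L) : |(ω t).1| ≤ (L - ε) / σ + σ * L / 2 := by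
  have hcos := (continuous_cos.comp_continuousOn h.continuousOn_angle).abs
  rw [h.fst_eq_integral ht, ← h.integral_sin]
  calc |∫ s in (0:ℝ)..t, cos (θ s)| ≤ ∫ s in (0:ℝ)..t, |cos (θ s)| :=
        abs_integral_le_integral_abs ht.1
  _ ≤ ∫ s in (0:ℝ)..L, |cos (θ s)| :=
        integral_mono_interval le_rfl ht.1 ht.2 (Filter.Eventually.of_forall fun _ => abs_nonneg _)
          (hcos.intervalIntegrable_of_Icc h.1.le)
  _ ≤ _ := integral_abs_cos_le h.continuousOn_angle h.1.le hσ

theorem abs_snd_le (h : IsMinExtremal m ε L lam ω θ) {t : ℝ} (ht : t ∈ Icc 0 L) :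
    |(ω t).2| ≤ L := by
  rw [h.snd_eq_integral ht]
  have := norm_integral_le_of_norm_le_const (a := 0) (b := t) (C := 1)
    (f := fun s => sin (θ s)) fun s _ => abs_sin_le_one _
  rw [Real.norm_eq_abs, sub_zero, one_mul, abs_of_nonneg ht.1] at this
  exact this.trans ht.2

theorem abs_Pf_le (h : IsMinExtremal m ε L lam ω θ) (hm : m ≠ 0) {B : ℝ} (hB : 0 < B)
    (hB' : ∀ t ∈ Icc 0 L, 2 * |(ω t).1| + m * |(ω t).2| ^ (m - 1) ≤ B) {t : ℝ}
    (ht : t ∈ Icc 0 L) : |Pf m (ω t)| ≤ 8 * B * (L - ε) := by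
  obtain ⟨-, hω, -, ⟨-, -, hω0, -, -, hcon⟩, -, -⟩ := id h
  rw [← h.integral_sin]
  refine abs_le_of_integral_sq_mul_sin_eq_zero (f := fun s => Pf m (ω s)) hB
    (fun x hx => (hasDerivAt_Pf_comp m (hω x hx)).hasDerivWithinAt) (fun x hx => ?_)
    (by simp [Pf, hω0, hm]) h.continuousOn_angle hcon ht
  refine le_trans ?_ (hB' x hx)
  calc |2 * (ω x).1 * cos (θ x) - m * (ω x).2 ^ (m - 1) * sin (θ x)|
      ≤ 2 * |(ω x).1| * |cos (θ x)| + m * |(ω x).2| ^ (m - 1) * |sin (θ x)| := by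
        simpa [abs_mul, abs_pow] using
          abs_sub (2 * (ω x).1 * cos (θ x)) (m * (ω x).2 ^ (m - 1) * sin (θ x))
  _ ≤ 2 * |(ω x).1| + m * |(ω x).2| ^ (m - 1) :=
      add_le_add (mul_le_of_le_one_right (by positivity) (abs_cos_le_one _))
        (mul_le_of_le_one_right (by positivity) (abs_sin_le_one _))

theorem abs_fst_le_rpow (h : IsMinExtremal m ε L lam ω θ) (hm : 1 ≤ m) (hε : 0 < ε) {c : ℝ}
    (hδ : L - ε ≤ c * ε ^ (m - 1)) (hL : L ≤ (1 + c) * ε) {t : ℝ} (ht : t ∈ Icc 0 L) :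
    |(ω t).1| ≤ (c + (1 + c) / 2) * ε ^ ((m : ℝ) / 2) := by
  -- this `σ` balances the two terms of `abs_fst_le`
  set σ := ε ^ ((m : ℝ) / 2 - 1)
  have hσ : 0 < σ := rpow_pos_of_pos hε _
  have hσμ : ε ^ (m - 1) = σ * ε ^ ((m : ℝ) / 2) := by
    rw [← rpow_add hε, ← rpow_natCast, Nat.cast_sub hm]; congr 1; push_cast; ring
  have hσε : σ * ε = ε ^ ((m : ℝ) / 2) := by
    rw [← rpow_add_one hε.ne']; congr 1; ring
  calc |(ω t).1| ≤ (L - ε) / σ + σ * L / 2 := h.abs_fst_le hσ ht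
  _ ≤ c * ε ^ (m - 1) / σ + σ * ((1 + c) * ε) / 2 := by gcongr
  _ = _ := by rw [hσμ, ← hσε]; field_simp

theorem abs_snd_pow_le_rpow (h : IsMinExtremal m ε L lam ω θ) (hm : 2 ≤ m) (hε : 0 < ε)
    (hε1 : ε ≤ 1) {a : ℝ} (hL : L ≤ a * ε) {t : ℝ} (ht : t ∈ Icc 0 L) :
    |(ω t).2| ^ (m - 1) ≤ a ^ (m - 1) * ε ^ ((m : ℝ) / 2) := by
  have ha : 0 ≤ a := by nlinarith [h.1]
  calc |(ω t).2| ^ (m - 1) ≤ (a * ε) ^ (m - 1) :=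
        pow_le_pow_left₀ (abs_nonneg _) ((h.abs_snd_le ht).trans hL) _
  _ = a ^ (m - 1) * ε ^ ((m - 1 : ℕ) : ℝ) := by rw [mul_pow, rpow_natCast]
  _ ≤ a ^ (m - 1) * ε ^ ((m : ℝ) / 2) := by
      refine mul_le_mul_of_nonneg_left (rpow_le_rpow_of_exponent_ge hε hε1 ?_) (by positivity)
      rw [Nat.cast_sub (by omega)]
      have : (2 : ℝ) ≤ m := by exact_mod_cast hm
      linarith

end IsMinExtremal

theorem statement7_general (m : ℕ) (hm : 5 ≤ m) :
    ∃ ε₀ > (0:ℝ), ∃ C > (0:ℝ), ∀ ε ∈ Set.Ioo (0:ℝ) ε₀,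
      ∀ (L lam : ℝ) (ω : ℝ → ℝ × ℝ) (θ : ℝ → ℝ), IsMinExtremal m ε L lam ω θ →
        ∀ t ∈ Set.Icc (0:ℝ) L, |Pf m (ω t)| ≤ C * ε ^ ((3 * (m : ℝ) - 2) / 2) := by
  set c : ℝ := m ^ 2 / 8 with hc
  set K : ℝ := 2 * (c + (1 + c) / 2) + m * (1 + c) ^ (m - 1) with hK
  refine ⟨1, one_pos, 8 * K * c, by positivity, ?_⟩
  rintro ε ⟨hε, hε1⟩ L lam ω θ h t ht
  have hδ : L - ε ≤ c * ε ^ (m - 1) := by rw [hc]; linarith [h.length_le (by omega) hε.le]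
  have hL : L ≤ (1 + c) * ε := by
    nlinarith [pow_le_of_le_one hε.le hε1.le (by omega : m - 1 ≠ 0)]
  have hB : ∀ x ∈ Icc 0 L, 2 * |(ω x).1| + m * |(ω x).2| ^ (m - 1) ≤ K * ε ^ ((m : ℝ) / 2) := by
    intro x hx
    have h₁ := h.abs_fst_le_rpow (by omega) hε hδ hL hx
    have h₂ := mul_le_mul_of_nonneg_left (h.abs_snd_pow_le_rpow (by omega) hε hε1.le hL hx)
      (Nat.cast_nonneg m : (0 : ℝ) ≤ m)
    rw [hK]
    linarith
  have hpow : ε ^ ((m : ℝ) / 2) * ε ^ (m - 1) = ε ^ ((3 * (m : ℝ) - 2) / 2) := by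
    rw [← rpow_natCast, ← rpow_add hε, Nat.cast_sub (by omega)]; congr 1; push_cast; ring
  calc |Pf m (ω t)| ≤ 8 * (K * ε ^ ((m : ℝ) / 2)) * (L - ε) :=
        h.abs_Pf_le (by omega) (by positivity) hB ht
  _ ≤ 8 * (K * ε ^ ((m : ℝ) / 2)) * (c * ε ^ (m - 1)) := by gcongr
  _ = 8 * K * c * ε ^ ((3 * (m : ℝ) - 2) / 2) := by rw [← hpow]; ring

/-- for small `ε`, any minimizing extremal satisfies
`max_{[0,L]} |P ∘ ω| ≤ C ε^{(3m−2)/2}`. -/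
theorem statement7 (m : ℕ) (hodd : Odd m) (hm : 5 ≤ m) :
    ∃ ε₀ > (0:ℝ), ∃ C > (0:ℝ), ∀ ε ∈ Set.Ioo (0:ℝ) ε₀,
      ∀ (L lam : ℝ) (ω : ℝ → ℝ × ℝ) (θ : ℝ → ℝ), IsMinExtremal m ε L lam ω θ →
        ∀ t ∈ Set.Icc (0:ℝ) L, |Pf m (ω t)| ≤ C * ε ^ ((3 * (m : ℝ) - 2) / 2) :=
  statement7_general m hm
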